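/- arXiv:math/9605218 — 2 statements merged into one kernel-verified Lean document; each statement's English description precedes it below -/
import Mathlib

section
/- Let c be the constant from the coordinate low M*-estimate for ellipsoids and c₁ = max{8/c², 1/log 2}. Let ε ∈ (0,1) and let F be a subspace of ℝ^n with dim F = m ≥ (1−ε)n. Then for every non-degenerate ellipsoid E in F and every ζ ∈ [c₁ ε log(2/ε), 1), there exists σ ⊆ {1,…,n} with |σ| ≥ (1−ζ)n such that P_σ(E) ⊇ [c√ζ / (2√2 · log^{1/2}(2/ζ) · M_E)] · D_σ. -/
open MeasureTheory Metric Set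
open scoped Pointwise

noncomputable section

/-- The coordinate subspace `ℝ^σ` of `ℝ^n` (w.r.t. the standard orthonormal basis). -/
def coordSubspace {n : ℕ} (σ : Finset (Fin n)) : Set (EuclideanSpace ℝ (Fin n)) :=
  {x | ∀ j ∉ σ, x j = 0}

/-- Orthogonal projection `P_σ` onto the coordinate subspace `ℝ^σ`. -/
def coordProj {n : ℕ} (σ : Finset (Fin n)) (x : EuclideanSpace ℝ (Fin n)) :
    EuclideanSpace ℝ (Fin n) := WithLp.toLp 2 (fun i => if i ∈ σ then x i else 0)

/-- `D_σ = D_n ∩ ℝ^σ`, the unit ball of the coordinate subspace `ℝ^σ`. -/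
def coordBall {n : ℕ} (σ : Finset (Fin n)) : Set (EuclideanSpace ℝ (Fin n)) :=
  closedBall 0 1 ∩ coordSubspace σ

/-- An ellipsoid in `ℝ^n`: the image of the Euclidean unit ball under an
invertible linear map. -/
def IsEllipsoid {n : ℕ} (E : Set (EuclideanSpace ℝ (Fin n))) : Prop :=
  ∃ T : EuclideanSpace ℝ (Fin n) ≃ₗ[ℝ] EuclideanSpace ℝ (Fin n),
    E = T '' closedBall 0 1

/-- `M_K = (∫_{S^{n-1}} ‖x‖_K^2 dσ(x))^{1/2}`, where `σ` is the rotation-invariant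
probability measure on the Euclidean unit sphere and `‖·‖_K` is the gauge of `K`. -/
def Mval {n : ℕ} (K : Set (EuclideanSpace ℝ (Fin n))) : ℝ :=
  Real.sqrt (⨍ x : sphere (0 : EuclideanSpace ℝ (Fin n)) 1,
    gauge K (x : EuclideanSpace ℝ (Fin n)) ^ 2
      ∂((volume : Measure (EuclideanSpace ℝ (Fin n))).toSphere))

/-- The quantity `M_K` for a body `K` living in a subspace `F` of `ℝ^n`,
computed over the unit sphere of `F` with its rotation-invariant probability
measure. -/
def MvalSub {n : ℕ} (F : Submodule ℝ (EuclideanSpace ℝ (Fin n))) (K : Set ↥F) : ℝ :=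
  Real.sqrt (⨍ x : sphere (0 : ↥F) 1,
    gauge K (x : ↥F) ^ 2 ∂((volume : Measure ↥F).toSphere))

/-- The statement of the coordinate low `M*`-estimate for ellipsoids (Theorem 2.2)
with constant `c`. -/
def CoordLowMstarEllipsoid (c : ℝ) : Prop :=
  ∀ (n : ℕ) (E : Set (EuclideanSpace ℝ (Fin n))), IsEllipsoid E →
    ∀ θ : ℝ, θ ∈ Set.Ioo (0 : ℝ) 1 →
      ∃ σ : Finset (Fin n), (1 - θ) * (n : ℝ) ≤ (σ.card : ℝ) ∧
        (c * Real.sqrt θ / (Real.sqrt (Real.log (2 / θ)) * Mval E)) • coordBall σ ⊆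
          coordProj σ '' E


variable {E : Type*} [NormedAddCommGroup E] [InnerProductSpace ℝ E] [FiniteDimensional ℝ E]
  [MeasurableSpace E] [BorelSpace E]

def sphereMap (e : E ≃ₗᵢ[ℝ] E) (x : sphere (0:E) 1) : sphere (0:E) 1 :=
  ⟨e x, by
    have := mem_sphere_iff_norm.mp x.2
    simp only [mem_sphere_iff_norm, sub_zero, e.norm_map] at *
    simpa using this⟩

lemma sphereMap_continuous (e : E ≃ₗᵢ[ℝ] E) : Continuous (sphereMap e) :=
  Continuous.subtype_mk (e.continuous.comp continuous_subtype_val) _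

@[simp] lemma sphereMap_coe (e : E ≃ₗᵢ[ℝ] E) (x : sphere (0:E) 1) :
    (sphereMap e x : E) = e x := rfl

lemma sphereMap_preimage (e : E ≃ₗᵢ[ℝ] E) (s : Set (sphere (0:E) 1)) :
    Subtype.val '' (sphereMap e ⁻¹' s) = e.symm '' (Subtype.val '' s) := by
  ext x
  constructor
  · rintro ⟨θ, hθ, rfl⟩
    exact ⟨e θ, ⟨sphereMap e θ, hθ, rfl⟩, by simp⟩
  · rintro ⟨y, ⟨θ, hθ, rfl⟩, rfl⟩
    have hmem : e.symm (θ : E) ∈ sphere (0:E) 1 := by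
      have := mem_sphere_iff_norm.mp θ.2
      simp only [mem_sphere_iff_norm, sub_zero, e.symm.norm_map]
      simpa [sub_zero] using this
    refine ⟨⟨e.symm θ, hmem⟩, ?_, rfl⟩
    show sphereMap e ⟨e.symm θ, hmem⟩ ∈ s
    have : sphereMap e ⟨e.symm (θ:E), hmem⟩ = θ := by
      apply Subtype.ext; simp [sphereMap]
    rw [this]; exact hθ

omit [FiniteDimensional ℝ E] [MeasurableSpace E] [BorelSpace E] in
lemma smul_set_image_linear (e : E ≃ₗᵢ[ℝ] E) (I : Set ℝ) (A : Set E) :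
    I • (e '' A) = e '' (I • A) := by
  ext x
  simp only [mem_smul, Set.mem_image]
  constructor
  · rintro ⟨r, hr, y, ⟨a, ha, rfl⟩, rfl⟩
    exact ⟨r • a, ⟨r, hr, a, ha, rfl⟩, by simp⟩
  · rintro ⟨y, ⟨r, hr, a, ha, rfl⟩, rfl⟩
    exact ⟨r, hr, e a, ⟨a, ha, rfl⟩, by simp⟩

lemma toSphere_map (e : E ≃ₗᵢ[ℝ] E) :
    Measure.map (sphereMap e) (volume : Measure E).toSphere = (volume : Measure E).toSphere := by
  refine Measure.ext fun s hs => ?_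
  rw [Measure.map_apply (sphereMap_continuous e).measurable hs]
  have hms : MeasurableSet (sphereMap e ⁻¹' s) := (sphereMap_continuous e).measurable hs
  rw [Measure.toSphere_apply' _ hms, Measure.toSphere_apply' _ hs]
  congr 1
  rw [sphereMap_preimage, smul_set_image_linear]
  have h1 : e.symm '' (Ioo (0:ℝ) 1 • (Subtype.val '' s)) = ⇑e ⁻¹' (Ioo (0:ℝ) 1 • (Subtype.val '' s)) := by
    ext x; constructor
    · rintro ⟨y, hy, rfl⟩; simpa using hy
    · intro hx; exact ⟨e x, hx, by simp⟩
  rw [h1]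
  exact e.measurePreserving.measure_preimage_emb
    (e.toHomeomorph.measurableEmbedding) _

open scoped RealInnerProductSpace

lemma exists_isometry_eq {u v : E} (h : ‖u‖ = ‖v‖) : ∃ e : E ≃ₗᵢ[ℝ] E, e u = v := by
  by_cases huv : u + v = 0
  · refine ⟨LinearIsometryEquiv.neg ℝ, ?_⟩
    simp [eq_neg_of_add_eq_zero_right huv]
  · refine ⟨Submodule.reflection (ℝ ∙ (u + v)), ?_⟩
    have hnz : u + v ≠ 0 := huv
    have hself : ⟪u, u⟫ = ⟪v, v⟫ := by
      rw [real_inner_self_eq_norm_sq, real_inner_self_eq_norm_sq, h]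
    have hnorm : ‖u + v‖ ^ 2 = 2 * ⟪u + v, u⟫ := by
      rw [← real_inner_self_eq_norm_sq]
      simp only [inner_add_left, inner_add_right]
      rw [real_inner_comm v u]
      linarith [hself]
    have key : (Submodule.starProjection (ℝ ∙ (u + v)) u : E) = (2:ℝ)⁻¹ • (u + v) := by
      rw [Submodule.starProjection_singleton, hnorm]
      have h2 : ⟪u + v, u⟫ ≠ 0 := by
        intro hz
        rw [hz, mul_zero] at hnorm
        exact hnz (norm_eq_zero.mp (pow_eq_zero_iff two_ne_zero |>.mp hnorm))
      congr 1
      push_cast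
      field_simp
      simp [h2]
    rw [Submodule.reflection_apply, key, two_smul]
    module

section Moments
variable (E)
variable [Nontrivial E]

lemma sphere_integrable_cont (g : sphere (0:E) 1 → ℝ) (hg : Continuous g) :
    Integrable g ((volume : Measure E).toSphere) := by
  have : HasCompactSupport g :=
    IsCompact.of_isClosed_subset isCompact_univ (isClosed_tsupport _) (subset_univ _)
  exact hg.integrable_of_hasCompactSupport this

variable {E}

lemma moment_inv (e : E ≃ₗᵢ[ℝ] E) (u : E) :
    (∫ x : sphere (0:E) 1, ⟪u, (x:E)⟫ ^ 2 ∂(volume : Measure E).toSphere)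
      = ∫ x : sphere (0:E) 1, ⟪e.symm u, (x:E)⟫ ^ 2 ∂(volume : Measure E).toSphere := by
  conv_lhs => rw [← toSphere_map e]
  rw [integral_map (sphereMap_continuous e).measurable.aemeasurable]
  · congr 1
    ext x
    rw [sphereMap_coe, ← LinearIsometryEquiv.inner_map_map e (e.symm u) (x:E),
      e.apply_symm_apply]
  · apply Continuous.aestronglyMeasurable
    exact (continuous_const.inner continuous_subtype_val).pow 2

lemma moment_unit_eq {u v : E} (hu : ‖u‖ = 1) (hv : ‖v‖ = 1) :
    (∫ x : sphere (0:E) 1, ⟪u, (x:E)⟫ ^ 2 ∂(volume : Measure E).toSphere)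
      = ∫ x : sphere (0:E) 1, ⟪v, (x:E)⟫ ^ 2 ∂(volume : Measure E).toSphere := by
  obtain ⟨e, he⟩ := exists_isometry_eq (hv.trans hu.symm)
  have := moment_inv e u
  rw [this, ← he, e.symm_apply_apply]

lemma moment_eq (u : E) :
    (∫ x : sphere (0:E) 1, ⟪u, (x:E)⟫ ^ 2 ∂(volume : Measure E).toSphere)
      = ‖u‖^2 * (((volume : Measure E).toSphere univ).toReal / Module.finrank ℝ E) := by
  set σE := (volume : Measure E).toSphere with hσ
  set d := Module.finrank ℝ E with hd
  have hd1 : 1 ≤ d := Module.finrank_pos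
  set b := stdOrthonormalBasis ℝ E with hb
  have hint : ∀ w : E, Integrable (fun x : sphere (0:E) 1 => ⟪w, (x:E)⟫ ^ 2) σE := fun w =>
    sphere_integrable_cont E _ ((continuous_const.inner continuous_subtype_val).pow 2)
  have hsum : ∑ i : Fin d, ∫ x : sphere (0:E) 1, ⟪b i, (x:E)⟫ ^ 2 ∂σE
      = (σE univ).toReal := by
    rw [← integral_finset_sum _ (fun i _ => hint (b i))]
    have : ∀ x : sphere (0:E) 1, ∑ i : Fin d, ⟪b i, (x:E)⟫ ^ 2 = 1 := by
      intro x
      have h1 := b.sum_inner_mul_inner (x:E) (x:E)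
      have h2 : ∀ i, ⟪(x:E), b i⟫ * ⟪b i, (x:E)⟫ = ⟪b i, (x:E)⟫ ^ 2 := fun i => by
        rw [real_inner_comm]; ring
      rw [Finset.sum_congr rfl (fun i _ => h2 i)] at h1
      rw [h1, real_inner_self_eq_norm_sq]
      have := mem_sphere_iff_norm.mp x.2
      rw [sub_zero] at this
      rw [this]; norm_num
    rw [integral_congr_ae (Filter.Eventually.of_forall this)]
    simp
    rfl
  have hC : ∀ w : E, ‖w‖ = 1 →
      (∫ x : sphere (0:E) 1, ⟪w, (x:E)⟫ ^ 2 ∂σE) = (σE univ).toReal / d := by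
    intro w hw
    have hall : ∀ i : Fin d, (∫ x : sphere (0:E) 1, ⟪b i, (x:E)⟫ ^ 2 ∂σE)
        = ∫ x : sphere (0:E) 1, ⟪w, (x:E)⟫ ^ 2 ∂σE := fun i =>
      moment_unit_eq (b.orthonormal.1 i) hw
    rw [Finset.sum_congr rfl (fun i _ => hall i), Finset.sum_const, Finset.card_univ,
      Fintype.card_fin, nsmul_eq_mul] at hsum
    have hdne : (d:ℝ) ≠ 0 := by positivity
    field_simp at hsum ⊢
    linarith [hsum]
  by_cases hu : u = 0
  · simp [hu]
  · have hnu : ‖u‖ ≠ 0 := norm_ne_zero_iff.mpr hu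
    have hw : ‖(‖u‖⁻¹ • u)‖ = 1 := by
      rw [norm_smul, norm_inv, norm_norm, inv_mul_cancel₀ hnu]
    have key := hC _ hw
    have expand : ∀ x : sphere (0:E) 1, ⟪u, (x:E)⟫ ^ 2 = ‖u‖^2 * ⟪‖u‖⁻¹ • u, (x:E)⟫ ^ 2 := by
      intro x
      rw [real_inner_smul_left]
      field_simp
    rw [integral_congr_ae (Filter.Eventually.of_forall expand), integral_const_mul, key]

end Moments

section NormSq
variable {G : Type*} [NormedAddCommGroup G] [InnerProductSpace ℝ G] [FiniteDimensional ℝ G]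

lemma norm_sq_sum_inner {ιG : Type*} [Fintype ιG] (c : OrthonormalBasis ιG ℝ G) (y : G) :
    ‖y‖^2 = ∑ k, ⟪c k, y⟫^2 := by
  have h1 := c.sum_inner_mul_inner y y
  have h2 : ∀ k, ⟪y, c k⟫ * ⟪c k, y⟫ = ⟪c k, y⟫ ^ 2 := fun k => by
    rw [real_inner_comm]; ring
  rw [Finset.sum_congr rfl (fun k _ => h2 k)] at h1
  rw [← real_inner_self_eq_norm_sq, ← h1]

variable [Nontrivial E]

lemma avg_norm_sq {ι ιG : Type*} [Fintype ι] [Fintype ιG] (S : E →ₗ[ℝ] G)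
    (b : OrthonormalBasis ι ℝ E) (c : OrthonormalBasis ιG ℝ G) :
    (∫ x : sphere (0:E) 1, ‖S (x:E)‖ ^ 2 ∂(volume : Measure E).toSphere)
      = (∑ i, ‖S (b i)‖^2) * (((volume : Measure E).toSphere univ).toReal
          / Module.finrank ℝ E) := by
  set σE := (volume : Measure E).toSphere
  have hexp : ∀ x : sphere (0:E) 1, ‖S (x:E)‖^2
      = ∑ k, ⟪(LinearMap.adjoint S) (c k), (x:E)⟫^2 := by
    intro x
    rw [norm_sq_sum_inner c (S (x:E))]
    congr 1; ext k
    rw [LinearMap.adjoint_inner_left]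
  rw [integral_congr_ae (Filter.Eventually.of_forall hexp),
    integral_finset_sum _ (fun k _ => sphere_integrable_cont E
      (fun x : sphere (0:E) 1 => ⟪(LinearMap.adjoint S) (c k), (x:E)⟫^2)
      ((continuous_const.inner continuous_subtype_val).pow 2))]
  have : ∀ k, (∫ x : sphere (0:E) 1, ⟪(LinearMap.adjoint S) (c k), (x:E)⟫^2 ∂σE)
      = ‖(LinearMap.adjoint S) (c k)‖^2 * ((σE univ).toReal / Module.finrank ℝ E) :=
    fun k => moment_eq _
  rw [Finset.sum_congr rfl (fun k _ => this k), ← Finset.sum_mul]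
  congr 1
  have swap : ∀ k, ‖(LinearMap.adjoint S) (c k)‖^2 = ∑ i, ⟪c k, S (b i)⟫^2 := by
    intro k
    rw [norm_sq_sum_inner b ((LinearMap.adjoint S) (c k))]
    congr 1; ext i
    rw [real_inner_comm, LinearMap.adjoint_inner_left]
  rw [Finset.sum_congr rfl (fun k _ => swap k), Finset.sum_comm]
  congr 1; ext i
  rw [norm_sq_sum_inner c (S (b i))]

end NormSq

section Avg
variable {G : Type*} [NormedAddCommGroup G] [InnerProductSpace ℝ G] [FiniteDimensional ℝ G]
variable [Nontrivial E]

lemma toSphere_univ_toReal_pos :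
    0 < (((volume : Measure E).toSphere) univ).toReal := by
  rw [Measure.toSphere_apply_univ]
  apply ENNReal.toReal_pos
  · apply mul_ne_zero
    · simp [Module.finrank_pos.ne']
    · exact (measure_ball_pos _ _ one_pos).ne'
  · exact ENNReal.mul_ne_top (ENNReal.natCast_ne_top _) measure_ball_lt_top.ne

lemma avg_norm_sq' {ι ιG : Type*} [Fintype ι] [Fintype ιG] (S : E →ₗ[ℝ] G)
    (b : OrthonormalBasis ι ℝ E) (c : OrthonormalBasis ιG ℝ G) :
    (⨍ x : sphere (0:E) 1, ‖S (x:E)‖ ^ 2 ∂(volume : Measure E).toSphere)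
      = (∑ i, ‖S (b i)‖^2) / Module.finrank ℝ E := by
  rw [average_eq, avg_norm_sq S b c, smul_eq_mul, measureReal_def]
  set t := (((volume : Measure E).toSphere) univ).toReal with hT
  have ht : t ≠ 0 := (toSphere_univ_toReal_pos (E := E)).ne'
  have : t⁻¹ * ((∑ i, ‖S (b i)‖^2) * (t / (Module.finrank ℝ E)))
      = (t⁻¹ * t) * ((∑ i, ‖S (b i)‖^2) / (Module.finrank ℝ E)) := by ring
  rw [this, inv_mul_cancel₀ ht, one_mul]

end Avg

section Gauge
variable {X : Type*} [NormedAddCommGroup X] [NormedSpace ℝ X]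
variable {Y : Type*} [NormedAddCommGroup Y] [NormedSpace ℝ Y]

lemma gauge_image_linearEquiv (T : X ≃ₗ[ℝ] Y) (s : Set X) (x : Y) :
    gauge (T '' s) x = gauge s (T.symm x) := by
  unfold gauge
  congr 1
  ext r
  simp only [Set.mem_setOf_eq]
  constructor
  · rintro ⟨hr, y, ⟨a, ha, rfl⟩, rfl⟩
    exact ⟨hr, by simpa using Set.smul_mem_smul_set ha⟩
  · rintro ⟨hr, hx⟩
    refine ⟨hr, ?_⟩
    obtain ⟨a, ha, hax⟩ := hx
    refine ⟨T a, ⟨a, ha, rfl⟩, ?_⟩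
    have : T (r • a) = T (T.symm x) := by rw [← hax]
    simpa [_root_.map_smul] using this

lemma gauge_ellipsoid (T : X ≃ₗ[ℝ] X) (x : X) :
    gauge (T '' closedBall 0 1) x = ‖T.symm x‖ := by
  rw [gauge_image_linearEquiv, gauge_closedBall zero_le_one, div_one]

end Gauge

section Extension
variable {n : ℕ} (F : Submodule ℝ (EuclideanSpace ℝ (Fin n)))

abbrev pFmap : EuclideanSpace ℝ (Fin n) →ₗ[ℝ] F :=
  (Submodule.orthogonalProjectionOnto F).toLinearMap

lemma pF_val (u : F) : pFmap F (u : EuclideanSpace ℝ (Fin n)) = u := by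
  simpa using Submodule.orthogonalProjectionOnto_mem_subspace_eq_self u

lemma pF_perp {w : EuclideanSpace ℝ (Fin n)} (hw : w ∈ Fᗮ) : pFmap F w = 0 := by
  simpa using Submodule.orthogonalProjectionOnto_apply_of_mem_orthogonal hw

variable (T : F ≃ₗ[ℝ] F) (δ : ℝ)

def extA : EuclideanSpace ℝ (Fin n) →ₗ[ℝ] EuclideanSpace ℝ (Fin n) :=
  F.subtype.comp (T.toLinearMap.comp (pFmap F)) +
    δ • (LinearMap.id - F.subtype.comp (pFmap F))

lemma extA_apply (x : EuclideanSpace ℝ (Fin n)) :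
    extA F T δ x = (T (pFmap F x) : EuclideanSpace ℝ (Fin n))
      + δ • (x - (pFmap F x : EuclideanSpace ℝ (Fin n))) := by
  simp [extA]

lemma extA_comp (hδ : δ ≠ 0) :
    (extA F T δ).comp (extA F T.symm δ⁻¹) = LinearMap.id := by
  ext x
  have hsub : x - ((pFmap F x : F) : EuclideanSpace ℝ (Fin n)) ∈ Fᗮ :=
    Submodule.sub_starProjection_mem_orthogonal (K := F) x
  simp only [LinearMap.comp_apply, LinearMap.id_apply, extA_apply]
  have h1 : pFmap F ((T.symm (pFmap F x) : EuclideanSpace ℝ (Fin n))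
      + δ⁻¹ • (x - (pFmap F x : EuclideanSpace ℝ (Fin n)))) = T.symm (pFmap F x) := by
    rw [map_add, pF_val, LinearMap.map_smul, pF_perp F hsub, smul_zero, add_zero]
  rw [h1]
  simp only [LinearEquiv.apply_symm_apply]
  rw [add_sub_cancel_left, smul_smul, mul_inv_cancel₀ hδ, one_smul, add_sub_cancel]

def extEquiv (hδ : δ ≠ 0) :
    EuclideanSpace ℝ (Fin n) ≃ₗ[ℝ] EuclideanSpace ℝ (Fin n) :=
  LinearEquiv.ofLinear (extA F T δ) (extA F T.symm δ⁻¹)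
    (extA_comp F T δ hδ)
    (by simpa [inv_inv] using extA_comp F T.symm δ⁻¹ (inv_ne_zero hδ))

lemma extEquiv_symm_apply (hδ : δ ≠ 0) (x : EuclideanSpace ℝ (Fin n)) :
    (extEquiv F T δ hδ).symm x = extA F T.symm δ⁻¹ x := rfl

lemma extEquiv_apply (hδ : δ ≠ 0) (x : EuclideanSpace ℝ (Fin n)) :
    extEquiv F T δ hδ x = extA F T δ x := rfl

lemma extA_val (u : F) : extA F T δ (u : EuclideanSpace ℝ (Fin n)) = (T u : EuclideanSpace ℝ (Fin n)) := by
  rw [extA_apply, pF_val]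
  simp

lemma extA_perp {w : EuclideanSpace ℝ (Fin n)} (hw : w ∈ Fᗮ) :
    extA F T δ w = δ • w := by
  rw [extA_apply, pF_perp F hw]
  simp

end Extension

section AdaptedBasis
variable {n : ℕ} (F : Submodule ℝ (EuclideanSpace ℝ (Fin n)))

def adaptedFun : Fin (Module.finrank ℝ F) ⊕ Fin (Module.finrank ℝ Fᗮ) →
    EuclideanSpace ℝ (Fin n) :=
  Sum.elim (fun i => ((stdOrthonormalBasis ℝ F) i : EuclideanSpace ℝ (Fin n)))
    (fun j => ((stdOrthonormalBasis ℝ Fᗮ) j : EuclideanSpace ℝ (Fin n)))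

lemma adaptedFun_orthonormal : Orthonormal ℝ (adaptedFun F) := by
  constructor
  · rintro (i | j) <;>
      simp [adaptedFun, Submodule.norm_coe, (stdOrthonormalBasis ℝ F).orthonormal.1,
        (stdOrthonormalBasis ℝ Fᗮ).orthonormal.1]
  · rintro (i | i) (j | j) hij <;> simp only [adaptedFun, Sum.elim_inl, Sum.elim_inr]
    · rw [← Submodule.coe_inner]
      exact (stdOrthonormalBasis ℝ F).orthonormal.2 (by simpa using hij)
    · exact (Submodule.mem_orthogonal F _).mp ((stdOrthonormalBasis ℝ Fᗮ) j).2 _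
        ((stdOrthonormalBasis ℝ F) i).2
    · exact (Submodule.mem_orthogonal' F _).mp ((stdOrthonormalBasis ℝ Fᗮ) i).2 _
        ((stdOrthonormalBasis ℝ F) j).2
    · rw [← Submodule.coe_inner]
      exact (stdOrthonormalBasis ℝ Fᗮ).orthonormal.2 (by simpa using hij)

lemma adaptedFun_span : ⊤ ≤ Submodule.span ℝ (Set.range (adaptedFun F)) := by
  have h1 : Set.range (adaptedFun F) =
      (⇑F.subtype '' Set.range (stdOrthonormalBasis ℝ F)) ∪
        (⇑Fᗮ.subtype '' Set.range (stdOrthonormalBasis ℝ Fᗮ)) := by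
    rw [adaptedFun, Sum.elim_range, ← Set.range_comp, ← Set.range_comp]; rfl
  rw [h1, Submodule.span_union, Submodule.span_image, Submodule.span_image]
  have h2 : Submodule.span ℝ (Set.range (stdOrthonormalBasis ℝ F)) = ⊤ := by
    rw [← (stdOrthonormalBasis ℝ F).coe_toBasis]
    exact (stdOrthonormalBasis ℝ F).toBasis.span_eq
  have h3 : Submodule.span ℝ (Set.range (stdOrthonormalBasis ℝ Fᗮ)) = ⊤ := by
    rw [← (stdOrthonormalBasis ℝ Fᗮ).coe_toBasis]
    exact (stdOrthonormalBasis ℝ Fᗮ).toBasis.span_eq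
  rw [h2, h3, Submodule.map_top, Submodule.map_top, Submodule.range_subtype,
    Submodule.range_subtype, Submodule.sup_orthogonal_of_hasOrthogonalProjection]

def adaptedBasis : OrthonormalBasis
    (Fin (Module.finrank ℝ F) ⊕ Fin (Module.finrank ℝ Fᗮ)) ℝ (EuclideanSpace ℝ (Fin n)) :=
  OrthonormalBasis.mk (adaptedFun_orthonormal F) (adaptedFun_span F)

@[simp] lemma adaptedBasis_inl (i) :
    adaptedBasis F (Sum.inl i) = ((stdOrthonormalBasis ℝ F) i : EuclideanSpace ℝ (Fin n)) := by
  rw [adaptedBasis, OrthonormalBasis.coe_mk]; rfl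

@[simp] lemma adaptedBasis_inr (j) :
    adaptedBasis F (Sum.inr j) = ((stdOrthonormalBasis ℝ Fᗮ) j : EuclideanSpace ℝ (Fin n)) := by
  rw [adaptedBasis, OrthonormalBasis.coe_mk]; rfl

end AdaptedBasis

section Coord
variable {n : ℕ} (σ : Finset (Fin n))

def coordProjL : EuclideanSpace ℝ (Fin n) →ₗ[ℝ] EuclideanSpace ℝ (Fin n) where
  toFun := coordProj σ
  map_add' x y := by ext i; by_cases h : i ∈ σ <;> simp [coordProj, h]
  map_smul' c x := by ext i; by_cases h : i ∈ σ <;> simp [coordProj, h]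

lemma coordProj_mem (x : EuclideanSpace ℝ (Fin n)) : coordProj σ x ∈ coordSubspace σ :=
  fun j hj => by simp [coordProj, hj]

lemma coordSubspace_smul {x : EuclideanSpace ℝ (Fin n)} (c : ℝ) (hx : x ∈ coordSubspace σ) :
    c • x ∈ coordSubspace σ := fun j hj => by
  have := hx j hj
  show c * x j = 0
  rw [this, mul_zero]

lemma coordProj_norm_le (x : EuclideanSpace ℝ (Fin n)) : ‖coordProj σ x‖ ≤ ‖x‖ := by
  rw [EuclideanSpace.norm_eq, EuclideanSpace.norm_eq]
  apply Real.sqrt_le_sqrt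
  apply Finset.sum_le_sum
  intro i _
  by_cases h : i ∈ σ <;> simp [coordProj, h] <;> positivity

lemma inner_coordProj (u y : EuclideanSpace ℝ (Fin n)) (hy : y ∈ coordSubspace σ) :
    (inner ℝ (coordProj σ u) y : ℝ) = inner ℝ u y := by
  rw [PiLp.inner_apply, PiLp.inner_apply]
  apply Finset.sum_congr rfl
  intro i _
  by_cases h : i ∈ σ
  · simp [coordProj, h]
  · simp [coordProj, h, hy i h]

lemma shrink_lemma (A : Set (EuclideanSpace ℝ (Fin n))) (hA0 : (0:EuclideanSpace ℝ (Fin n)) ∈ A)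
    (hconv : Convex ℝ A) (hclosed : IsClosed A) (hsub : A ⊆ coordSubspace σ)
    {r ρ d : ℝ} (hd : 0 ≤ d) (hρ : 0 ≤ ρ) (hr : ρ + d ≤ r)
    (h : r • coordBall σ ⊆ A + d • coordBall σ) :
    ρ • coordBall σ ⊆ A := by
  rintro y ⟨y₀, ⟨hy₀b, hy₀s⟩, rfl⟩
  set y := ρ • y₀ with hy
  have hy₀n : ‖y₀‖ ≤ 1 := by simpa using mem_closedBall_iff_norm.mp hy₀b
  have hyn : ‖y‖ ≤ ρ := by
    rw [hy, norm_smul, Real.norm_of_nonneg hρ]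
    nlinarith
  have hys : y ∈ coordSubspace σ := coordSubspace_smul σ ρ hy₀s
  by_contra hyA
  obtain ⟨f, u, hfA, hfy⟩ := geometric_hahn_banach_closed_point hconv hclosed hyA
  set v := (InnerProductSpace.toDual ℝ (EuclideanSpace ℝ (Fin n))).symm f with hv
  have hfv : ∀ z, f z = inner ℝ v z := fun z => (InnerProductSpace.toDual_symm_apply).symm
  set w := coordProj σ v with hw
  have hfw : ∀ z ∈ coordSubspace σ, f z = inner ℝ w z := fun z hz => by
    rw [hfv z, ← inner_coordProj σ v z hz]
  have hu0 : 0 < u := by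
    have := hfA 0 hA0
    simpa using this
  have huy : u < inner ℝ w y := by rw [← hfw y hys]; exact hfy
  have hwn : 0 < ‖w‖ := by
    rcases le_or_gt ‖w‖ 0 with h0 | h0
    · exfalso
      have : ‖w‖ = 0 := le_antisymm h0 (norm_nonneg _)
      have hw0 : w = 0 := norm_eq_zero.mp this
      rw [hw0] at huy
      simp at huy
      linarith
    · exact h0
  have hρpos : 0 < ρ := by
    by_contra hρ0
    push_neg at hρ0
    have : ρ = 0 := le_antisymm hρ0 hρ
    rw [this, zero_smul] at hy
    rw [hy] at huy
    simp at huy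
    linarith
  -- the test point
  have hz : (r / ‖w‖) • w ∈ r • coordBall σ := by
    refine ⟨‖w‖⁻¹ • w, ⟨?_, coordSubspace_smul σ _ (coordProj_mem σ v)⟩, ?_⟩
    · rw [mem_closedBall_iff_norm, sub_zero, norm_smul, norm_inv, norm_norm,
        inv_mul_cancel₀ hwn.ne']
    · show r • (‖w‖⁻¹ • w) = _
      rw [smul_smul, div_eq_mul_inv]
  obtain ⟨a, ha, b, hb, hab⟩ := h hz
  obtain ⟨b₀, ⟨hb₀b, hb₀s⟩, rfl⟩ := hb
  have hb₀n : ‖b₀‖ ≤ 1 := by simpa using mem_closedBall_iff_norm.mp hb₀b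
  have hinna : (inner ℝ w a : ℝ) < u := by rw [← hfw a (hsub ha)]; exact hfA a ha
  have hinnb : (inner ℝ w b₀ : ℝ) ≤ ‖w‖ := by
    calc (inner ℝ w b₀ : ℝ) ≤ ‖w‖ * ‖b₀‖ := real_inner_le_norm w b₀
    _ ≤ ‖w‖ * 1 := by nlinarith
    _ = ‖w‖ := mul_one _
  have hinnz : (inner ℝ w ((r / ‖w‖) • w) : ℝ) = r * ‖w‖ := by
    rw [real_inner_smul_right, real_inner_self_eq_norm_sq]
    field_simp
  have hyw : (inner ℝ w y : ℝ) ≤ ρ * ‖w‖ := by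
    calc (inner ℝ w y : ℝ) ≤ ‖w‖ * ‖y‖ := real_inner_le_norm w y
    _ ≤ ‖w‖ * ρ := by nlinarith
    _ = ρ * ‖w‖ := mul_comm _ _
  have expand : (inner ℝ w ((r / ‖w‖) • w) : ℝ) = inner ℝ w a + d * inner ℝ w b₀ := by
    rw [← hab, inner_add_right, real_inner_smul_right]
  rw [hinnz] at expand
  nlinarith [expand, hinna, hinnb, huy, hyw]

end Coord

section MvalFormulas
variable {n : ℕ} (F : Submodule ℝ (EuclideanSpace ℝ (Fin n)))

lemma mvalSub_formula [Nontrivial F] (T : F ≃ₗ[ℝ] F) :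
    MvalSub F (⇑T '' closedBall 0 1)
      = Real.sqrt ((∑ i, ‖T.symm ((stdOrthonormalBasis ℝ F) i)‖^2) / Module.finrank ℝ F) := by
  rw [MvalSub]
  congr 1
  have hgauge : ∀ x : sphere (0 : F) 1, gauge (⇑T '' closedBall 0 1) (x : F) ^ 2
      = ‖T.symm.toLinearMap (x : F)‖ ^ 2 := fun x => by rw [gauge_ellipsoid]; rfl
  rw [average_congr (Filter.Eventually.of_forall hgauge)]
  exact avg_norm_sq' T.symm.toLinearMap (stdOrthonormalBasis ℝ F) (stdOrthonormalBasis ℝ F)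

lemma mval_ext_formula [Nontrivial (EuclideanSpace ℝ (Fin n))]
    (T : F ≃ₗ[ℝ] F) {δ : ℝ} (hδ : δ ≠ 0) :
    Mval (⇑(extEquiv F T δ hδ) '' closedBall 0 1)
      = Real.sqrt (((∑ i, ‖T.symm ((stdOrthonormalBasis ℝ F) i)‖^2)
          + δ⁻¹^2 * (Module.finrank ℝ Fᗮ)) / n) := by
  rw [Mval]
  congr 1
  have hgauge : ∀ x : sphere (0 : EuclideanSpace ℝ (Fin n)) 1,
      gauge (⇑(extEquiv F T δ hδ) '' closedBall 0 1) (x : EuclideanSpace ℝ (Fin n)) ^ 2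
      = ‖(extA F T.symm δ⁻¹) (x : EuclideanSpace ℝ (Fin n))‖ ^ 2 := fun x => by
    rw [gauge_ellipsoid, extEquiv_symm_apply]
  rw [average_congr (Filter.Eventually.of_forall hgauge),
    avg_norm_sq' (extA F T.symm δ⁻¹) (adaptedBasis F)
      (stdOrthonormalBasis ℝ (EuclideanSpace ℝ (Fin n)))]
  rw [Fintype.sum_sum_type]
  congr 1
  · congr 1
    · apply Finset.sum_congr rfl
      intro i _
      rw [adaptedBasis_inl, extA_val]
      rw [Submodule.norm_coe]
    · have : ∀ j, ‖(extA F T.symm δ⁻¹) (adaptedBasis F (Sum.inr j))‖^2 = δ⁻¹^2 := by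
        intro j
        rw [adaptedBasis_inr, extA_perp F T.symm δ⁻¹ ((stdOrthonormalBasis ℝ Fᗮ) j).2,
          norm_smul, Submodule.norm_coe, (stdOrthonormalBasis ℝ Fᗮ).orthonormal.1, mul_one,
          Real.norm_eq_abs, sq_abs]
      rw [Finset.sum_congr rfl (fun j _ => this j), Finset.sum_const, Finset.card_univ,
        Fintype.card_fin, nsmul_eq_mul, mul_comm]
  · rw [finrank_euclideanSpace_fin]

end MvalFormulas

section ImageSubset
variable {n : ℕ} (F : Submodule ℝ (EuclideanSpace ℝ (Fin n))) (T : F ≃ₗ[ℝ] F)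

lemma coordProj_ext_subset (σ : Finset (Fin n)) {δ : ℝ} (hδ : 0 < δ) :
    coordProj σ '' (⇑(extEquiv F T δ hδ.ne') '' closedBall 0 1)
      ⊆ (coordProj σ '' (Subtype.val '' (⇑T '' closedBall 0 1))) + δ • coordBall σ := by
  rintro _ ⟨_, ⟨u, hu, rfl⟩, rfl⟩
  rw [mem_closedBall_iff_norm, sub_zero] at hu
  have hpFn : ‖pFmap F u‖ ≤ 1 := by
    calc ‖pFmap F u‖ = ‖(Submodule.orthogonalProjectionOnto F) u‖ := rfl
    _ ≤ ‖Submodule.orthogonalProjectionOnto F‖ * ‖u‖ := (Submodule.orthogonalProjectionOnto F).le_opNorm u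
    _ ≤ 1 * 1 := by
        apply mul_le_mul (Submodule.orthogonalProjectionOnto_norm_le F) hu (norm_nonneg _)
        linarith [norm_nonneg (Submodule.orthogonalProjectionOnto F (E := EuclideanSpace ℝ (Fin n)))]
    _ = 1 := one_mul _
  have hperpn : ‖u - ((pFmap F u : F) : EuclideanSpace ℝ (Fin n))‖ ≤ 1 := by
    have heq : u - ((pFmap F u : F) : EuclideanSpace ℝ (Fin n))
        = ((Submodule.orthogonalProjectionOnto Fᗮ u : Fᗮ) : EuclideanSpace ℝ (Fin n)) :=
      (Submodule.starProjection_orthogonal_val u).symm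
    rw [heq, Submodule.norm_coe]
    calc ‖(Submodule.orthogonalProjectionOnto Fᗮ) u‖ ≤ ‖Submodule.orthogonalProjectionOnto Fᗮ‖ * ‖u‖ :=
        (Submodule.orthogonalProjectionOnto Fᗮ).le_opNorm u
    _ ≤ 1 * 1 := by
        apply mul_le_mul (Submodule.orthogonalProjectionOnto_norm_le Fᗮ) hu (norm_nonneg _)
        linarith [norm_nonneg (Submodule.orthogonalProjectionOnto (E := EuclideanSpace ℝ (Fin n)) Fᗮ)]
    _ = 1 := one_mul _
  rw [extEquiv_apply, extA_apply]
  refine ⟨coordProj σ ((T (pFmap F u) : F) : EuclideanSpace ℝ (Fin n)), ?_,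
    δ • coordProj σ (u - ((pFmap F u : F) : EuclideanSpace ℝ (Fin n))), ?_, ?_⟩
  · exact ⟨_, ⟨_, ⟨_, mem_closedBall_iff_norm.mpr (by simpa using hpFn), rfl⟩, rfl⟩, rfl⟩
  · refine Set.smul_mem_smul_set ⟨?_, coordProj_mem σ _⟩
    rw [mem_closedBall_iff_norm, sub_zero]
    exact le_trans (coordProj_norm_le σ _) hperpn
  · show coordProjL σ _ + δ • coordProjL σ _ = coordProjL σ _
    rw [← map_smul (coordProjL σ) δ, ← map_add]

end ImageSubset

set_option maxHeartbeats 1000000 in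
/-- Theorem 2.3: a coordinate low `M*`-estimate for a non-degenerate ellipsoid `E`
living in a subspace `F` of `ℝ^n` of dimension `m ≥ (1-ε)n`, for every
`ζ ∈ [c₁ ε log(2/ε), 1)`, where `c` is the constant from Theorem 2.2 and
`c₁ = max {8/c², 1/log 2}`. -/
theorem lowMstar_coordinate_ellipsoid_in_subspace
    (c : ℝ) (hc : 0 < c) (hthm : CoordLowMstarEllipsoid c)
    (n : ℕ) (ε : ℝ) (hε : ε ∈ Set.Ioo (0 : ℝ) 1)
    (F : Submodule ℝ (EuclideanSpace ℝ (Fin n)))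
    (hF : (1 - ε) * (n : ℝ) ≤ (Module.finrank ℝ F : ℝ))
    (E : Set (EuclideanSpace ℝ (Fin n)))
    (hE : ∃ T : ↥F ≃ₗ[ℝ] ↥F, E = Subtype.val '' (T '' closedBall 0 1))
    (ζ : ℝ)
    (hζ₁ : max (8 / c ^ 2) (1 / Real.log 2) * (ε * Real.log (2 / ε)) ≤ ζ)
    (hζ₂ : ζ < 1) :
    ∃ σ : Finset (Fin n), (1 - ζ) * (n : ℝ) ≤ (σ.card : ℝ) ∧
      (c * Real.sqrt ζ /
          (2 * Real.sqrt 2 * Real.sqrt (Real.log (2 / ζ)) *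
            MvalSub F (Subtype.val ⁻¹' E))) • coordBall σ ⊆
        coordProj σ '' E := by
  obtain ⟨T, hE'⟩ := hE
  obtain ⟨hε0, hε1⟩ := hε
  have hlog2 : 0 < Real.log 2 := Real.log_pos one_lt_two
  have h2ε : (2:ℝ) ≤ 2 / ε := by
    rw [le_div_iff₀ hε0]; nlinarith
  have hLε : Real.log 2 ≤ Real.log (2/ε) := Real.log_le_log two_pos h2ε
  have hLεpos : 0 < Real.log (2/ε) := lt_of_lt_of_le hlog2 hLε
  have hmaxge : 1 / Real.log 2 ≤ max (8 / c ^ 2) (1 / Real.log 2) := le_max_right _ _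
  have hζpos : 0 < ζ := by
    have h1 : 0 < (1 / Real.log 2) * (ε * Real.log (2/ε)) := by positivity
    have h2 : (1 / Real.log 2) * (ε * Real.log (2/ε))
        ≤ max (8 / c ^ 2) (1 / Real.log 2) * (ε * Real.log (2/ε)) := by
      apply mul_le_mul_of_nonneg_right hmaxge (by positivity)
    linarith
  have hζε : ε ≤ ζ := by
    have h1 : ε ≤ (1 / Real.log 2) * (ε * Real.log (2/ε)) := by
      rw [div_mul_eq_mul_div, one_mul, le_div_iff₀ hlog2]
      nlinarith
    have h2 : (1 / Real.log 2) * (ε * Real.log (2/ε))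
        ≤ max (8 / c ^ 2) (1 / Real.log 2) * (ε * Real.log (2/ε)) :=
      mul_le_mul_of_nonneg_right hmaxge (by positivity)
    linarith
  have h2ζ : (2:ℝ) ≤ 2 / ζ := by
    rw [le_div_iff₀ hζpos]; nlinarith
  have hL : 0 < Real.log (2/ζ) := lt_of_lt_of_le hlog2 (Real.log_le_log two_pos h2ζ)
  have hLle : Real.log (2/ζ) ≤ Real.log (2/ε) := by
    apply Real.log_le_log (by positivity)
    apply div_le_div_of_nonneg_left (by norm_num) hε0 hζε
  have hkey : 8 * ε * Real.log (2/ζ) ≤ c^2 * ζ := by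
    have h8 : 8 / c ^ 2 ≤ max (8 / c ^ 2) (1 / Real.log 2) := le_max_left _ _
    have hc2 : (0:ℝ) < c^2 := by positivity
    have step1 : 8 * ε * Real.log (2/ζ) ≤ 8 * ε * Real.log (2/ε) := by nlinarith
    have step2 : 8 * ε * Real.log (2/ε) = c^2 * ((8 / c^2) * (ε * Real.log (2/ε))) := by
      field_simp
    have step3 : c^2 * ((8 / c^2) * (ε * Real.log (2/ε)))
        ≤ c^2 * (max (8 / c ^ 2) (1 / Real.log 2) * (ε * Real.log (2/ε))) := by
      apply mul_le_mul_of_nonneg_left _ hc2.le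
      exact mul_le_mul_of_nonneg_right h8 (by positivity)
    have step4 : c^2 * (max (8 / c ^ 2) (1 / Real.log 2) * (ε * Real.log (2/ε))) ≤ c^2 * ζ :=
      mul_le_mul_of_nonneg_left hζ₁ hc2.le
    linarith
  rcases Nat.eq_zero_or_pos n with hn0 | hn
  · subst hn0
    haveI : Subsingleton (EuclideanSpace ℝ (Fin 0)) :=
      ⟨fun a b => by ext i; exact i.elim0⟩
    refine ⟨∅, by simp, ?_⟩
    intro x hx
    have h0E : (0 : EuclideanSpace ℝ (Fin 0)) ∈ E := by
      rw [hE']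
      exact ⟨T 0, ⟨0, mem_closedBall_self zero_le_one, rfl⟩, by simp⟩
    have : x = coordProj ∅ 0 := Subsingleton.elim _ _
    exact ⟨0, h0E, this.symm⟩
  -- main case
  have hnpos : (0:ℝ) < n := by exact_mod_cast hn
  haveI : Nontrivial (EuclideanSpace ℝ (Fin n)) := by
    apply Module.nontrivial_of_finrank_pos (R := ℝ) (h := by rw [finrank_euclideanSpace_fin]; exact hn)
  set m := Module.finrank ℝ F with hm
  have hmpos : 0 < m := by
    have h1 : (0:ℝ) < (1-ε) * n := by nlinarith
    have : (0:ℝ) < (m:ℝ) := lt_of_lt_of_le h1 hF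
    exact_mod_cast this
  haveI : Nontrivial ↥F := Module.nontrivial_of_finrank_pos (R := ℝ) hmpos
  set S₀ := ∑ i, ‖T.symm ((stdOrthonormalBasis ℝ F) i)‖^2 with hS₀
  have hS₀pos : 0 < S₀ := by
    apply Finset.sum_pos' (fun i _ => by positivity)
    refine ⟨⟨0, hmpos⟩, Finset.mem_univ _, ?_⟩
    have hb : (stdOrthonormalBasis ℝ F) ⟨0, hmpos⟩ ≠ 0 := by
      intro h
      have := (stdOrthonormalBasis ℝ F).orthonormal.1 ⟨0, hmpos⟩
      rw [h] at this; simp at this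
    have : T.symm ((stdOrthonormalBasis ℝ F) ⟨0, hmpos⟩) ≠ 0 := by
      intro h
      exact hb (by simpa using congrArg T h)
    exact pow_pos (norm_pos_iff.mpr this) 2
  have hpre : Subtype.val ⁻¹' E = ⇑T '' closedBall 0 1 := by
    rw [hE', Set.preimage_image_eq _ Subtype.val_injective]
  have hMvalSub : MvalSub F (Subtype.val ⁻¹' E) = Real.sqrt (S₀ / m) := by
    rw [hpre, mvalSub_formula]
  set M := Real.sqrt (S₀ / m) with hMdef
  have hMpos : 0 < M := Real.sqrt_pos.mpr (by positivity)
  have hM2 : M^2 = S₀ / m := Real.sq_sqrt (by positivity)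
  set δ := Real.sqrt ε / M with hδdef
  have hδpos : 0 < δ := by positivity
  set Etil := ⇑(extEquiv F T δ hδpos.ne') '' closedBall 0 1 with hEtil
  obtain ⟨σ, hcard, hcont⟩ := hthm n Etil ⟨_, rfl⟩ ζ ⟨hζpos, hζ₂⟩
  refine ⟨σ, hcard, ?_⟩
  -- dimension of orthogonal complement
  have hdim : m + Module.finrank ℝ Fᗮ = n := by
    rw [hm, Submodule.finrank_add_finrank_orthogonal, finrank_euclideanSpace_fin]
  have hk : ((Module.finrank ℝ Fᗮ : ℝ)) ≤ ε * n := by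
    have h1 : (Module.finrank ℝ Fᗮ : ℝ) = (n:ℝ) - m := by
      have := hdim
      push_cast [← this]
      ring
    rw [h1]
    nlinarith [hF]
  have hmn : (m:ℝ) ≤ n := by
    have : m ≤ n := by omega
    exact_mod_cast this
  have hMval : Mval Etil
      = Real.sqrt ((S₀ + δ⁻¹^2 * (Module.finrank ℝ Fᗮ)) / n) := mval_ext_formula F T hδpos.ne'
  have hδinv2 : δ⁻¹^2 = M^2 / ε := by
    rw [hδdef]
    rw [inv_div, div_pow, Real.sq_sqrt hε0.le]
  have hMvalpos : 0 < Mval Etil := by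
    rw [hMval]
    apply Real.sqrt_pos.mpr
    have : (0:ℝ) ≤ δ⁻¹^2 * (Module.finrank ℝ Fᗮ) := by positivity
    have h2 : 0 < S₀ + δ⁻¹^2 * (Module.finrank ℝ Fᗮ) := by linarith
    positivity
  have hMvalle : Mval Etil ≤ Real.sqrt 2 * M := by
    rw [hMval]
    have harg : (S₀ + δ⁻¹^2 * (Module.finrank ℝ Fᗮ)) / n ≤ 2 * M^2 := by
      rw [hδinv2]
      have hS₀' : S₀ = m * M^2 := by
        rw [hM2]; field_simp
      have h1 : S₀ ≤ n * M^2 := by rw [hS₀']; nlinarith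
      have h2 : M^2/ε * (Module.finrank ℝ Fᗮ) ≤ M^2/ε * (ε * n) := by
        apply mul_le_mul_of_nonneg_left hk (by positivity)
      have h3 : M^2/ε * (ε * n) = n * M^2 := by field_simp
      rw [div_le_iff₀ hnpos]
      nlinarith
    calc Real.sqrt ((S₀ + δ⁻¹^2 * (Module.finrank ℝ Fᗮ)) / n) ≤ Real.sqrt (2 * M^2) :=
      Real.sqrt_le_sqrt harg
    _ = Real.sqrt 2 * M := by
      rw [Real.sqrt_mul (by norm_num), Real.sqrt_sq hMpos.le]
  -- scalars
  set sL := Real.sqrt (Real.log (2/ζ)) with hsL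
  have hsLpos : 0 < sL := Real.sqrt_pos.mpr hL
  set ρ := c * Real.sqrt ζ / (2 * Real.sqrt 2 * sL * M) with hρdef
  set r := c * Real.sqrt ζ / (sL * Mval Etil) with hrdef
  have hρpos : 0 < ρ := by
    apply div_pos (by positivity) (by positivity)
  have hδρ : δ ≤ ρ := by
    rw [hδdef, hρdef, div_le_div_iff₀ hMpos (by positivity)]
    have hstep : Real.sqrt ε * (2 * Real.sqrt 2 * sL) ≤ c * Real.sqrt ζ := by
      have lhs_eq : Real.sqrt ε * (2 * Real.sqrt 2 * sL) = Real.sqrt (8 * ε * Real.log (2/ζ)) := by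
        have h8a : Real.sqrt (8 * ε * Real.log (2/ζ)) = Real.sqrt (8 * ε) * sL := by
          rw [hsL, Real.sqrt_mul (by positivity)]
        have h8b : Real.sqrt (8 * ε) = Real.sqrt 8 * Real.sqrt ε :=
          Real.sqrt_mul (by norm_num) _
        have h8c : Real.sqrt 8 = 2 * Real.sqrt 2 := by
          rw [show (8:ℝ) = 2^2 * 2 by norm_num, Real.sqrt_mul (by positivity),
            Real.sqrt_sq (by norm_num : (0:ℝ) ≤ 2)]
        rw [h8a, h8b, h8c]
        ring
      have rhs_eq : c * Real.sqrt ζ = Real.sqrt (c^2 * ζ) := by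
        rw [Real.sqrt_mul (by positivity), Real.sqrt_sq hc.le]
      rw [lhs_eq, rhs_eq]
      exact Real.sqrt_le_sqrt hkey
    calc Real.sqrt ε * (2 * Real.sqrt 2 * sL * M) = (Real.sqrt ε * (2 * Real.sqrt 2 * sL)) * M := by ring
    _ ≤ (c * Real.sqrt ζ) * M := mul_le_mul_of_nonneg_right hstep hMpos.le
    _ = c * Real.sqrt ζ * M := rfl
  have h2ρr : ρ + δ ≤ r := by
    have hr2ρ : 2 * ρ ≤ r := by
      rw [hρdef, hrdef]
      have h1 : sL * Mval Etil ≤ sL * (Real.sqrt 2 * M) :=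
        mul_le_mul_of_nonneg_left hMvalle hsLpos.le
      have h2 : c * Real.sqrt ζ / (sL * (Real.sqrt 2 * M)) ≤ c * Real.sqrt ζ / (sL * Mval Etil) :=
        div_le_div_of_nonneg_left (by positivity) (by positivity) h1
      have h3 : 2 * (c * Real.sqrt ζ / (2 * Real.sqrt 2 * sL * M))
          = c * Real.sqrt ζ / (sL * (Real.sqrt 2 * M)) := by
        have hs2 : (0:ℝ) < Real.sqrt 2 := by positivity
        field_simp
      rw [h3]
      exact h2
    linarith
  -- final containment
  have hsubset : r • coordBall σ ⊆ (coordProj σ '' E) + δ • coordBall σ := by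
    refine subset_trans hcont ?_
    rw [hE']
    exact coordProj_ext_subset F T σ hδpos
  have hgoal : (c * Real.sqrt ζ / (2 * Real.sqrt 2 * Real.sqrt (Real.log (2 / ζ)) *
      MvalSub F (Subtype.val ⁻¹' E))) = ρ := by
    rw [hMvalSub, hρdef, hsL, hMdef]
  rw [hgoal]
  apply shrink_lemma σ (coordProj σ '' E) _ _ _ _ hδpos.le hρpos.le h2ρr hsubset
  · exact ⟨0, by
      rw [hE']
      exact ⟨T 0, ⟨0, mem_closedBall_self zero_le_one, rfl⟩, by simp⟩,
      by ext i; simp [coordProj]⟩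
  · rw [hE']
    have h1 : Convex ℝ (closedBall (0:F) 1) := convex_closedBall _ _
    have h2 : Convex ℝ (⇑T '' closedBall 0 1) := h1.linear_image T.toLinearMap
    have h3 : Convex ℝ (Subtype.val '' (⇑T '' closedBall 0 1)) := h2.linear_image F.subtype
    exact h3.linear_image (coordProjL σ)
  · rw [hE']
    apply IsCompact.isClosed
    apply IsCompact.image
    apply IsCompact.image
    apply IsCompact.image (isCompact_closedBall 0 1)
    · exact T.toLinearMap.continuous_of_finiteDimensional
    · exact continuous_subtype_val
    · exact (coordProjL σ).continuous_of_finiteDimensional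
  · rintro _ ⟨x, _, rfl⟩
    exact coordProj_mem σ x
end
end

section
/- There exist absolute constants c, c' > 0 such that: for every ellipsoid E in ℝ^n and every natural number m ≤ c√n, there exists a subset σ of {1,…,n} with |σ| = m such that E ∩ ℝ^σ ⊇ [c'/(√m · M_E)] · D_σ. -/
/-! For `E = T '' D_n` the gauge of `E` is `‖T⁻¹ ·‖`, and the rotation invariance of the sphere
measure gives `n · M_E² = ∑ⱼ ‖T⁻¹ eⱼ‖²`. By Markov's inequality at least half of the
coordinates satisfy `‖T⁻¹ eⱼ‖² ≤ 2 M_E²`; on the span of `m` of them Cauchy–Schwarz gives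
`‖T⁻¹ y‖ ≤ √(2m) M_E ‖y‖`, so `c = c' = 1/2` work. -/

open MeasureTheory Metric Set
open scoped Pointwise

noncomputable section

namespace LinearIsometryEquiv

variable {E : Type*} [NormedAddCommGroup E] [NormedSpace ℝ E]

def sphereHomeomorph (R : E ≃ₗᵢ[ℝ] E) : sphere (0 : E) 1 ≃ₜ sphere (0 : E) 1 :=
  R.toHomeomorph.subtype fun x => by simp

lemma coe_sphereHomeomorph (R : E ≃ₗᵢ[ℝ] E) (x : sphere (0 : E) 1) :
    (R.sphereHomeomorph x : E) = R x :=
  rfl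

lemma preimage_Ioo_smul (R : E ≃ₗᵢ[ℝ] E) (s : Set E) :
    R ⁻¹' (Ioo (0 : ℝ) 1 • s) = Ioo (0 : ℝ) 1 • R ⁻¹' s := by
  rw [← R.symm_symm, ← image_eq_preimage_symm, ← image_eq_preimage_symm]
  simp only [← iUnion_smul_set, image_iUnion₂, image_smul_set]

lemma image_coe_preimage_sphereHomeomorph (R : E ≃ₗᵢ[ℝ] E) (s : Set (sphere (0 : E) 1)) :
    Subtype.val '' (R.sphereHomeomorph ⁻¹' s) = R ⁻¹' (Subtype.val '' s) := by
  ext x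
  constructor
  · rintro ⟨y, hy, rfl⟩
    exact ⟨_, hy, rfl⟩
  · rintro ⟨y, hy, hyx⟩
    have hx : x ∈ sphere (0 : E) 1 := by simpa [hyx] using y.2
    refine ⟨⟨x, hx⟩, ?_, rfl⟩
    have hRx : R.sphereHomeomorph ⟨x, hx⟩ = y := Subtype.ext hyx.symm
    rwa [mem_preimage, hRx]

variable [MeasurableSpace E] [BorelSpace E]

lemma measurePreserving_sphereHomeomorph {μ : Measure E} (R : E ≃ₗᵢ[ℝ] E)
    (hR : MeasurePreserving R μ μ) :
    MeasurePreserving R.sphereHomeomorph μ.toSphere μ.toSphere := by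
  refine ⟨R.sphereHomeomorph.measurable, ?_⟩
  ext s hs
  rw [Measure.map_apply R.sphereHomeomorph.measurable hs,
    Measure.toSphere_apply' _ (R.sphereHomeomorph.measurable hs), Measure.toSphere_apply' _ hs,
    image_coe_preimage_sphereHomeomorph, ← preimage_Ioo_smul]
  exact congrArg _ (MeasurePreserving.measure_preimage_equiv
    (f := R.toHomeomorph.toMeasurableEquiv) hR _)

end LinearIsometryEquiv

open scoped RealInnerProductSpace

lemma LinearMap.sum_norm_adjoint_apply_sq {ι κ E F : Type*} [Fintype ι] [Fintype κ]
    [NormedAddCommGroup E] [InnerProductSpace ℝ E] [FiniteDimensional ℝ E]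
    [NormedAddCommGroup F] [InnerProductSpace ℝ F] [FiniteDimensional ℝ F]
    (b : OrthonormalBasis ι ℝ E) (c : OrthonormalBasis κ ℝ F) (A : E →ₗ[ℝ] F) :
    ∑ k, ‖A.adjoint (c k)‖ ^ 2 = ∑ i, ‖A (b i)‖ ^ 2 := by
  simp only [← b.sum_sq_inner_right, ← c.sum_sq_inner_left, LinearMap.adjoint_inner_right]
  exact Finset.sum_comm

section SphereIntegrals

variable {E F : Type*} [NormedAddCommGroup E] [InnerProductSpace ℝ E] [FiniteDimensional ℝ E]
  [MeasurableSpace E] [BorelSpace E]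
  [NormedAddCommGroup F] [InnerProductSpace ℝ F] [FiniteDimensional ℝ F]

lemma integrable_inner_sq_sphere (v : E) :
    Integrable (fun x : sphere (0 : E) 1 => ⟪v, (x : E)⟫ ^ 2) (volume : Measure E).toSphere :=
  Continuous.integrable_of_hasCompactSupport (by fun_prop) (.of_compactSpace _)

lemma integral_inner_sq_sphere_eq_of_norm_eq {u v : E} (h : ‖u‖ = ‖v‖) :
    ∫ x : sphere (0 : E) 1, ⟪u, (x : E)⟫ ^ 2 ∂(volume : Measure E).toSphere
      = ∫ x : sphere (0 : E) 1, ⟪v, (x : E)⟫ ^ 2 ∂(volume : Measure E).toSphere := by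
  set R := Submodule.reflection (ℝ ∙ (v - u))ᗮ
  have hRv : R v = u := Submodule.reflection_sub h.symm
  have hinner (x : E) : ⟪v, R x⟫ = ⟪u, x⟫ := by
    rw [← R.inner_map_map, Submodule.reflection_reflection, hRv]
  conv_rhs => rw [← (R.measurePreserving_sphereHomeomorph R.measurePreserving).integral_comp
    R.sphereHomeomorph.measurableEmbedding]
  simp only [R.coe_sphereHomeomorph, hinner]

lemma finrank_mul_integral_inner_sq_sphere (v : E) :
    Module.finrank ℝ E * ∫ x : sphere (0 : E) 1, ⟪v, (x : E)⟫ ^ 2 ∂(volume : Measure E).toSphere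
      = ‖v‖ ^ 2 * (volume : Measure E).toSphere.real univ := by
  -- Parseval on the sphere, plus: all the integrals `∫ ⟪‖v‖ • b i, x⟫²` agree with `∫ ⟪v, x⟫²`.
  set b := stdOrthonormalBasis ℝ E
  have hsum (x : sphere (0 : E) 1) : ∑ i, ⟪b i, (x : E)⟫ ^ 2 = 1 := by
    rw [b.sum_sq_inner_right, norm_eq_of_mem_sphere x, one_pow]
  have hb (i) : ∫ x : sphere (0 : E) 1, ⟪v, (x : E)⟫ ^ 2 ∂(volume : Measure E).toSphere
      = ‖v‖ ^ 2 * ∫ x : sphere (0 : E) 1, ⟪b i, (x : E)⟫ ^ 2 ∂(volume : Measure E).toSphere := by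
    rw [integral_inner_sq_sphere_eq_of_norm_eq (v := ‖v‖ • b i)
      (by simp [norm_smul, b.orthonormal.1 i]), ← integral_const_mul]
    simp only [real_inner_smul_left, mul_pow]
  calc _ = ∑ i, ‖v‖ ^ 2 * ∫ x : sphere (0 : E) 1, ⟪b i, (x : E)⟫ ^ 2 ∂(volume : Measure E).toSphere := by
        simp [← hb]
    _ = ‖v‖ ^ 2 * (volume : Measure E).toSphere.real univ := by
        rw [← Finset.mul_sum, ← integral_finsetSum _ fun i _ => integrable_inner_sq_sphere _]
        simp [hsum]

lemma finrank_mul_integral_norm_map_sq_sphere {ι : Type*} [Fintype ι]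
    (b : OrthonormalBasis ι ℝ E) (A : E →ₗ[ℝ] F) :
    Module.finrank ℝ E * ∫ x : sphere (0 : E) 1, ‖A x‖ ^ 2 ∂(volume : Measure E).toSphere
      = (∑ i, ‖A (b i)‖ ^ 2) * (volume : Measure E).toSphere.real univ := by
  set c := stdOrthonormalBasis ℝ F
  have hnorm (x : E) : ‖A x‖ ^ 2 = ∑ k, ⟪A.adjoint (c k), x⟫ ^ 2 := by
    simp only [← c.sum_sq_inner_right, LinearMap.adjoint_inner_left]
  conv_lhs => simp only [hnorm]
  rw [integral_finsetSum _ fun k _ => integrable_inner_sq_sphere _, Finset.mul_sum,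
    ← A.sum_norm_adjoint_apply_sq b c, Finset.sum_mul]
  simp only [finrank_mul_integral_inner_sq_sphere]

end SphereIntegrals

lemma gauge_preimage_linearMap {E F 𝓕 : Type*} [AddCommGroup E] [Module ℝ E] [AddCommGroup F]
    [Module ℝ F] [FunLike 𝓕 E F] [LinearMapClass 𝓕 ℝ E F] (f : 𝓕) (s : Set F) (x : E) :
    gauge (f ⁻¹' s) x = gauge s (f x) := by
  simp only [gauge_def', mem_preimage, map_smul]

lemma gauge_image_closedBall {E : Type*} [NormedAddCommGroup E] [NormedSpace ℝ E]
    (T : E ≃ₗ[ℝ] E) (x : E) : gauge (T '' closedBall 0 1) x = ‖T.symm x‖ := by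
  rw [T.image_eq_preimage_symm, gauge_preimage_linearMap, gauge_closedBall zero_le_one, div_one]

lemma Mval_image_closedBall_sq {n : ℕ}
    (T : EuclideanSpace ℝ (Fin n) ≃ₗ[ℝ] EuclideanSpace ℝ (Fin n)) :
    Mval (T '' closedBall 0 1) ^ 2
      = (∑ j, ‖T.symm (EuclideanSpace.single j 1)‖ ^ 2) / n := by
  have key := finrank_mul_integral_norm_map_sq_sphere (EuclideanSpace.basisFun (Fin n) ℝ)
    (T.symm : EuclideanSpace ℝ (Fin n) →ₗ[ℝ] EuclideanSpace ℝ (Fin n))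
  simp only [finrank_euclideanSpace_fin, EuclideanSpace.basisFun_apply, LinearEquiv.coe_coe] at key
  rw [Mval, average_eq,
    Real.sq_sqrt (smul_nonneg (by positivity) (integral_nonneg fun _ => by positivity))]
  simp only [gauge_image_closedBall, smul_eq_mul]
  obtain rfl | hn := Nat.eq_zero_or_pos n
  · simp [Measure.toSphere_real_apply_univ]
  have : NeZero n := ⟨hn.ne'⟩
  have : NeZero (volume : Measure (EuclideanSpace ℝ (Fin n))).toSphere :=
    ⟨Measure.toSphere_ne_zero _⟩
  have := measureReal_univ_ne_zero (μ := (volume : Measure (EuclideanSpace ℝ (Fin n))).toSphere)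
  field_simp
  linarith

lemma norm_map_sq_le_of_mem_coordSubspace {n : ℕ} {F 𝓕 : Type*} [SeminormedAddCommGroup F]
    [NormedSpace ℝ F] [FunLike 𝓕 (EuclideanSpace ℝ (Fin n)) F]
    [LinearMapClass 𝓕 ℝ (EuclideanSpace ℝ (Fin n)) F] (A : 𝓕) {σ : Finset (Fin n)}
    {y : EuclideanSpace ℝ (Fin n)} (hy : y ∈ coordSubspace σ) :
    ‖A y‖ ^ 2 ≤ ‖y‖ ^ 2 * ∑ j ∈ σ, ‖A (EuclideanSpace.single j 1)‖ ^ 2 := by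
  have hy_sum : y = ∑ j ∈ σ, y j • EuclideanSpace.single j 1 := by
    rw [Finset.sum_subset σ.subset_univ fun j _ hj => by simp [hy j hj]]
    simpa using ((EuclideanSpace.basisFun (Fin n) ℝ).sum_repr y).symm
  have hcoord : ∑ j ∈ σ, |y j| ^ 2 ≤ ‖y‖ ^ 2 := by
    rw [EuclideanSpace.real_norm_sq_eq]
    simpa only [sq_abs] using Finset.sum_le_sum_of_subset_of_nonneg σ.subset_univ
      fun j _ _ => sq_nonneg (y j)
  have htri : ‖A y‖ ≤ ∑ j ∈ σ, |y j| * ‖A (EuclideanSpace.single j 1)‖ := by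
    conv_lhs => rw [hy_sum, map_sum]
    refine (norm_sum_le _ _).trans_eq (Finset.sum_congr rfl fun j _ => ?_)
    rw [map_smul, norm_smul, Real.norm_eq_abs]
  calc ‖A y‖ ^ 2 ≤ (∑ j ∈ σ, |y j| * ‖A (EuclideanSpace.single j 1)‖) ^ 2 := by gcongr
    _ ≤ (∑ j ∈ σ, |y j| ^ 2) * ∑ j ∈ σ, ‖A (EuclideanSpace.single j 1)‖ ^ 2 :=
        Finset.sum_mul_sq_le_sq_mul_sq _ _ _
    _ ≤ ‖y‖ ^ 2 * ∑ j ∈ σ, ‖A (EuclideanSpace.single j 1)‖ ^ 2 := by gcongr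

lemma Finset.exists_card_eq_forall_le_two_mul_average {ι : Type*} [Fintype ι] {f : ι → ℝ}
    (hf : ∀ i, 0 ≤ f i) {m : ℕ} (hm : 2 * m ≤ Fintype.card ι) :
    ∃ s : Finset ι, s.card = m ∧ ∀ i ∈ s, f i ≤ 2 * (∑ j, f j) / Fintype.card ι := by
  classical
  set t := 2 * (∑ j, f j) / Fintype.card ι
  set bad := Finset.univ.filter fun i => t < f i
  have hbad : 2 * bad.card ≤ Fintype.card ι := by
    obtain h | hne := bad.eq_empty_or_nonempty
    · simp [h]
    have hN : (0 : ℝ) < Fintype.card ι := by exact_mod_cast hne.card_pos.trans_le bad.card_le_univ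
    have hsum : 0 ≤ ∑ j, f j := Finset.sum_nonneg fun j _ => hf j
    have hmarkov : bad.card * t < ∑ j, f j := calc
      bad.card * t = ∑ _ ∈ bad, t := by simp
      _ < ∑ j ∈ bad, f j := Finset.sum_lt_sum_of_nonempty hne fun i hi => (mem_filter.1 hi).2
      _ ≤ ∑ j, f j := Finset.sum_le_sum_of_subset_of_nonneg bad.subset_univ fun j _ _ => hf j
    have : (2 * bad.card : ℝ) < Fintype.card ι := by
      simp only [t] at hmarkov
      field_simp at hmarkov
      nlinarith
    exact_mod_cast this.le
  obtain ⟨s, hs, hcard⟩ := Finset.exists_subset_card_eq (s := badᶜ) (n := m)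
    (by rw [card_compl]; omega)
  exact ⟨s, hcard, fun i hi => by simpa [bad] using hs hi⟩

lemma smul_coordBall_subset_image_closedBall {n : ℕ}
    (T : EuclideanSpace ℝ (Fin n) ≃ₗ[ℝ] EuclideanSpace ℝ (Fin n)) (σ : Finset (Fin n)) {r K : ℝ}
    (hK : ∑ j ∈ σ, ‖T.symm (EuclideanSpace.single j 1)‖ ^ 2 ≤ K) (hr : r ^ 2 * K ≤ 1) :
    r • coordBall σ ⊆ T '' closedBall 0 1 ∩ coordSubspace σ := by
  rintro _ ⟨y, ⟨hy, hyσ⟩, rfl⟩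
  refine ⟨?_, fun j hj => by simp [hyσ j hj]⟩
  rw [mem_closedBall_zero_iff] at hy
  rw [T.image_eq_preimage_symm, mem_preimage, mem_closedBall_zero_iff, map_smul, norm_smul,
    ← sq_le_one_iff₀ (by positivity)]
  calc (‖r‖ * ‖T.symm y‖) ^ 2 = r ^ 2 * ‖T.symm y‖ ^ 2 := by
        rw [mul_pow, Real.norm_eq_abs, sq_abs]
    _ ≤ r ^ 2 * (‖y‖ ^ 2 * K) := by
        gcongr
        exact (norm_map_sq_le_of_mem_coordSubspace T.symm hyσ).trans (by gcongr)
    _ ≤ r ^ 2 * K := by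
        have hK0 : 0 ≤ K := (Finset.sum_nonneg fun _ _ => by positivity).trans hK
        gcongr
        exact mul_le_of_le_one_left hK0 (pow_le_one₀ (norm_nonneg y) hy)
    _ ≤ 1 := hr

/-- Theorem 2.4: there exist absolute constants `c, c' > 0` such that for every
ellipsoid `E` in `ℝ^n` and every `m ≤ c√n` there is a coordinate subset `σ` of
cardinality `m` with `E ∩ ℝ^σ ⊇ [c'/(√m M_E)] D_σ`. -/
theorem coordinate_section_ellipsoid_contains_ball :
    ∃ c : ℝ, ∃ c' : ℝ, 0 < c ∧ 0 < c' ∧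
      ∀ (n : ℕ) (E : Set (EuclideanSpace ℝ (Fin n))), IsEllipsoid E →
        ∀ m : ℕ, (m : ℝ) ≤ c * Real.sqrt n →
          ∃ σ : Finset (Fin n), σ.card = m ∧
            (c' / (Real.sqrt m * Mval E)) • coordBall σ ⊆
              E ∩ coordSubspace σ := by
  refine ⟨1 / 2, 1 / 2, by norm_num, by norm_num, ?_⟩
  rintro n _ ⟨T, rfl⟩ m hm
  set M := Mval (T '' closedBall 0 1)
  have h2m : 2 * m ≤ n := by
    have : √(n : ℝ) ≤ n := Real.sqrt_le_self_iff.2 (by rcases n with _ | n <;> simp)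
    exact_mod_cast (by linarith : (2 * m : ℝ) ≤ n)
  obtain ⟨σ, hσ, hbound⟩ := Finset.exists_card_eq_forall_le_two_mul_average
    (f := fun j => ‖T.symm (EuclideanSpace.single j 1)‖ ^ 2) (fun _ => by positivity)
    (by simpa using h2m)
  simp only [Fintype.card_fin, mul_div_assoc, ← Mval_image_closedBall_sq] at hbound
  refine ⟨σ, hσ, smul_coordBall_subset_image_closedBall T σ (K := m * (2 * M ^ 2)) ?_ ?_⟩
  · simpa [hσ] using Finset.sum_le_card_nsmul σ _ _ hbound
  · calc (1 / 2 / (√m * M)) ^ 2 * (m * (2 * M ^ 2))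
          = 1 / 2 * ((m * M ^ 2) / (m * M ^ 2)) := by
          rw [div_pow, mul_pow, Real.sq_sqrt m.cast_nonneg]
          ring
      _ ≤ 1 := by linarith [div_self_le_one ((m : ℝ) * M ^ 2)]
end
end
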